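/- arXiv:2206.07341 — 7 statements merged into one kernel-verified Lean document; each statement's English description precedes it below -/
import Mathlib

section
/- Let R be a finite set of strict pairwise comparisons and let θ', θ be families of subsets of F with θ' ⊆ θ and U_θ'^R ≠ ∅, U_θ^R ≠ ∅ (both in Θ_R). For all alternatives A, B: if A ≻_θ^R B then A ≻_{θ'}^R B. -/
/-- The θ-additive utility: `f_{θ,u}(A) = Σ_{S ∈ θ, S ⊆ A} u(S)`. -/
def util {α : Type*} [DecidableEq α] (θ : Finset (Finset α)) (u : Finset α → ℝ)
    (A : Finset α) : ℝ :=
  ∑ S ∈ θ.filter (· ⊆ A), u S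

/-- `U_R^θ`: the set of utility parameter functions compatible with every
strict preference in `R`. -/
def compatSet {α : Type*} [DecidableEq α] (R : Finset (Finset α × Finset α))
    (θ : Finset (Finset α)) : Set (Finset α → ℝ) :=
  {u | ∀ p ∈ R, util θ u p.2 < util θ u p.1}

/-- The ordinal dominance relation `A ≻_θ^R B`. -/
def dominates {α : Type*} [DecidableEq α] (R : Finset (Finset α × Finset α))
    (θ : Finset (Finset α)) (A B : Finset α) : Prop :=
  ∀ u ∈ compatSet R θ, util θ u B < util θ u A

lemma util_extend {α : Type*} [DecidableEq α] (θ' θ : Finset (Finset α))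
    (hθθ : θ' ⊆ θ) (u : Finset α → ℝ) (A : Finset α) :
    util θ (fun S => if S ∈ θ' then u S else 0) A = util θ' u A := by
  unfold util
  rw [Finset.sum_ite_mem]
  apply Finset.sum_congr _ (fun _ _ => rfl)
  ext S
  simp only [Finset.mem_inter, Finset.mem_filter]
  exact ⟨fun h => ⟨h.2, h.1.2⟩, fun h => ⟨⟨hθθ h.1, h.2⟩, h.1⟩⟩

/-- If `θ' ⊆ θ`, both in `Θ_R`, then `A ≻_θ^R B ⇒ A ≻_{θ'}^R B`. -/
theorem stmt3 {α : Type*} [Fintype α] [DecidableEq α]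
    (R : Finset (Finset α × Finset α))
    (θ' θ : Finset (Finset α)) (hθθ : θ' ⊆ θ)
    (hθ' : (compatSet R θ').Nonempty) (hθ : (compatSet R θ).Nonempty)
    (A B : Finset α) (h : dominates R θ A B) :
    dominates R θ' A B := by
  intro u hu
  have key := util_extend θ' θ hθθ u
  have hu' : (fun S => if S ∈ θ' then u S else 0) ∈ compatSet R θ := by
    intro p hp
    rw [key, key]
    exact hu p hp
  have := h _ hu'
  rwa [key, key] at this
end

section
/- Let R be a finite set of strict pairwise comparisons and let θ', θ be families of subsets of F with θ' ⊆ θ and U_R^{θ'} ≠ ∅, U_R^θ ≠ ∅. For all alternatives A, B: if A ≻_{θ'}^R B then it is not the case that B ≻_θ^R A. -/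
/-- If `θ' ⊆ θ`, both in `Θ_R`, then `A ≻_{θ'}^R B ⇒ ¬(B ≻_θ^R A)`. -/
theorem stmt5 {α : Type*} [Fintype α] [DecidableEq α]
    (R : Finset (Finset α × Finset α))
    (θ' θ : Finset (Finset α)) (hθθ : θ' ⊆ θ)
    (hθ' : (compatSet R θ').Nonempty) (hθ : (compatSet R θ).Nonempty)
    (A B : Finset α) (h : dominates R θ' A B) :
    ¬ dominates R θ B A := by
  obtain ⟨u', hu'⟩ := hθ'
  set u : Finset α → ℝ := fun S => if S ∈ θ' then u' S else 0 with hu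
  have key2 : ∀ X : Finset α, util θ' u X = util θ' u' X := by
    intro X
    apply Finset.sum_congr rfl
    intro S hS
    simp only [hu, if_pos (Finset.mem_filter.mp hS).1]
  have key : ∀ X : Finset α, util θ u X = util θ' u' X := by
    intro X
    unfold util
    rw [← Finset.sum_filter_of_ne (p := fun S => S ∈ θ')]
    · have heq : (θ.filter (fun x => x ⊆ X)).filter (fun x => x ∈ θ')
          = θ'.filter (fun x => x ⊆ X) := by
        ext S
        simp only [Finset.mem_filter]
        constructor
        · rintro ⟨⟨_, hx⟩, hm⟩; exact ⟨hm, hx⟩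
        · rintro ⟨hm, hx⟩; exact ⟨⟨hθθ hm, hx⟩, hm⟩
      rw [heq]
      apply Finset.sum_congr rfl
      intro S hS
      simp only [hu, if_pos (Finset.mem_filter.mp hS).1]
    · intro S _ hne
      by_contra hmem
      exact hne (by simp [hu, hmem])
  intro hdom
  have h1 : u ∈ compatSet R θ := by
    intro p hp
    rw [key, key]
    exact hu' p hp
  have h2 : u ∈ compatSet R θ' := by
    intro p hp
    rw [key2, key2]
    exact hu' p hp
  have ha := h u h2
  rw [key2, key2] at ha
  have hb := hdom u h1
  rw [key, key] at hb
  linarith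
end

section
/- Let R be a finite set of strict pairwise comparisons over subsets of the finite attribute set F, let Θ_R^min be the set of simplest models compatible with R, and let θ*_R = ⋃_{θ ∈ Θ_R^min} θ be the unifying model. Then for every θ ∈ Θ_R^min and all alternatives A, B: if A ≻_{θ*_R}^R B then A ≻_θ^R B. -/
/-- `Θ_R`: the models compatible with `R`. -/
def Theta {α : Type*} [DecidableEq α] (R : Finset (Finset α × Finset α)) :
    Set (Finset (Finset α)) :=
  {θ | (compatSet R θ).Nonempty}

/-- The degree of a model: the greatest cardinality of a subset in `θ` (0 if `θ = ∅`). -/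
def degree {α : Type*} (θ : Finset (Finset α)) : ℕ :=
  θ.sup Finset.card

/-- The lexicographic simplicity order `θ' ⊏_lex θ`: smaller degree, or equal
degree and fewer parameters. -/
def lexLt {α : Type*} (θ' θ : Finset (Finset α)) : Prop :=
  degree θ' < degree θ ∨ (degree θ' = degree θ ∧ θ'.card < θ.card)

/-- `Θ_R^min`: the simplest models compatible with `R`. -/
def ThetaMin {α : Type*} [DecidableEq α] (R : Finset (Finset α × Finset α)) :
    Set (Finset (Finset α)) :=
  {θ ∈ Theta R | ¬ ∃ θ' ∈ Theta R, lexLt θ' θ}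

/-- The unifying model `θ*_R = ⋃_{θ ∈ Θ_R^min} θ`. -/
noncomputable def thetaStar {α : Type*} [Fintype α] [DecidableEq α]
    (R : Finset (Finset α × Finset α)) : Finset (Finset α) :=
  @Finset.filter _ (fun S => ∃ θ ∈ ThetaMin R, S ∈ θ)
    (fun _ => Classical.propDecidable _) Finset.univ

/-- For every simplest model `θ ∈ Θ_R^min`, dominance w.r.t. the unifying
model `θ*_R` implies dominance w.r.t. `θ`. -/
theorem stmt6 {α : Type*} [Fintype α] [DecidableEq α]
    (R : Finset (Finset α × Finset α))
    (θ : Finset (Finset α)) (hθ : θ ∈ ThetaMin R)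
    (A B : Finset α) (h : dominates R (thetaStar R) A B) :
    dominates R θ A B := by
  classical
  intro u hu
  set u' : Finset α → ℝ := fun S => if S ∈ θ then u S else 0 with hu'def
  have hsub : θ ⊆ thetaStar R := fun S hS =>
    (@Finset.mem_filter _ _ (fun _ => Classical.propDecidable _) _ _).mpr
      ⟨Finset.mem_univ _, θ, hθ, hS⟩
  have key : ∀ C, util (thetaStar R) u' C = util θ u C := by
    intro C
    unfold util
    rw [← Finset.sum_subset (Finset.filter_subset_filter _ hsub)]
    · apply Finset.sum_congr rfl
      intro S hS
      simp [u', (Finset.mem_filter.mp hS).1]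
    · intro S hS hnS
      have : S ∉ θ := fun hSθ =>
        hnS (Finset.mem_filter.mpr ⟨hSθ, (Finset.mem_filter.mp hS).2⟩)
      simp [u', this]
  have hu' : u' ∈ compatSet R (thetaStar R) := by
    intro p hp
    rw [key, key]
    exact hu p hp
  have := h u' hu'
  rwa [key, key] at this
end

section
/- There exist a finite attribute set F, a finite set R of strict pairwise comparisons over subsets of F, two families θ₁, θ₂ of subsets of F with U_R^{θ₁} ≠ ∅ and U_R^{θ₂} ≠ ∅, and alternatives A, B such that A ≻_{θ₁}^R B and A ≻_{θ₂}^R B, but it is not the case that A ≻_{θ₁ ∪ θ₂}^R B. (In particular, the converse of the unifying-model proposition fails.) -/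
private lemma util_eq (θ L : Finset (Finset (Fin 4))) (u : Finset (Fin 4) → ℝ)
    (A : Finset (Fin 4)) (h : θ.filter (· ⊆ A) = L) :
    util θ u A = ∑ S ∈ L, u S := by rw [util, h]

/-- There is a finite attribute set, a preference set `R`, two compatible
models `θ₁, θ₂` and alternatives `A, B` with `A ≻_{θ₁}^R B` and `A ≻_{θ₂}^R B`
but not `A ≻_{θ₁ ∪ θ₂}^R B`. -/
theorem stmt7 :
    ∃ (n : ℕ) (R : Finset (Finset (Fin n) × Finset (Fin n)))
      (θ₁ θ₂ : Finset (Finset (Fin n))) (A B : Finset (Fin n)),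
      (compatSet R θ₁).Nonempty ∧ (compatSet R θ₂).Nonempty ∧
      dominates R θ₁ A B ∧ dominates R θ₂ A B ∧
      ¬ dominates R (θ₁ ∪ θ₂) A B := by
  refine ⟨4, {({0,1,2}, {3}), ({3}, ∅), (∅, {1,2})},
    {{0},{2},{3}}, {{0},{1},{3}}, {0}, {1}, ?_, ?_, ?_, ?_, ?_⟩
  · -- compatSet nonempty for θ₁
    refine ⟨fun S => if S = {0} then 2 else if S = {2} then -1 else if S = {3} then 1/2 else 0,
      fun p hp => ?_⟩
    fin_cases hp <;> simp only
    · rw [util_eq _ {{3}} _ _ (by decide), util_eq _ {{0},{2}} _ _ (by decide),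
        Finset.sum_insert (by decide), Finset.sum_singleton, Finset.sum_singleton]
      norm_num (config := { decide := true })
    · rw [util_eq _ ∅ _ _ (by decide), util_eq _ {{3}} _ _ (by decide),
        Finset.sum_empty, Finset.sum_singleton]
      norm_num (config := { decide := true })
    · rw [util_eq _ {{2}} _ _ (by decide), util_eq _ ∅ _ _ (by decide),
        Finset.sum_empty, Finset.sum_singleton]
      norm_num (config := { decide := true })
  · -- compatSet nonempty for θ₂
    refine ⟨fun S => if S = {0} then 2 else if S = {1} then -1 else if S = {3} then 1/2 else 0,
      fun p hp => ?_⟩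
    fin_cases hp <;> simp only
    · rw [util_eq _ {{3}} _ _ (by decide), util_eq _ {{0},{1}} _ _ (by decide),
        Finset.sum_insert (by decide), Finset.sum_singleton, Finset.sum_singleton]
      norm_num (config := { decide := true })
    · rw [util_eq _ ∅ _ _ (by decide), util_eq _ {{3}} _ _ (by decide),
        Finset.sum_empty, Finset.sum_singleton]
      norm_num (config := { decide := true })
    · rw [util_eq _ {{1}} _ _ (by decide), util_eq _ ∅ _ _ (by decide),
        Finset.sum_empty, Finset.sum_singleton]
      norm_num (config := { decide := true })
  · -- dominates θ₁
    intro u hu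
    have h1 := hu (({0,1,2}, {3}) : Finset (Fin 4) × Finset (Fin 4)) (by decide)
    have h2 := hu (({3}, ∅) : Finset (Fin 4) × Finset (Fin 4)) (by decide)
    have h3 := hu ((∅, {1,2}) : Finset (Fin 4) × Finset (Fin 4)) (by decide)
    simp only at h1 h2 h3
    rw [util_eq _ {{3}} _ _ (by decide), util_eq _ {{0},{2}} _ _ (by decide),
      Finset.sum_insert (by decide), Finset.sum_singleton, Finset.sum_singleton] at h1
    rw [util_eq _ ∅ _ _ (by decide), util_eq _ {{3}} _ _ (by decide),
      Finset.sum_empty, Finset.sum_singleton] at h2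
    rw [util_eq _ {{2}} _ _ (by decide), util_eq _ ∅ _ _ (by decide),
      Finset.sum_empty, Finset.sum_singleton] at h3
    rw [util_eq _ ∅ _ _ (by decide), util_eq _ {{0}} _ _ (by decide),
      Finset.sum_empty, Finset.sum_singleton]
    linarith
  · -- dominates θ₂
    intro u hu
    have h1 := hu (({0,1,2}, {3}) : Finset (Fin 4) × Finset (Fin 4)) (by decide)
    have h2 := hu (({3}, ∅) : Finset (Fin 4) × Finset (Fin 4)) (by decide)
    have h3 := hu ((∅, {1,2}) : Finset (Fin 4) × Finset (Fin 4)) (by decide)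
    simp only at h1 h2 h3
    rw [util_eq _ {{3}} _ _ (by decide), util_eq _ {{0},{1}} _ _ (by decide),
      Finset.sum_insert (by decide), Finset.sum_singleton, Finset.sum_singleton] at h1
    rw [util_eq _ ∅ _ _ (by decide), util_eq _ {{3}} _ _ (by decide),
      Finset.sum_empty, Finset.sum_singleton] at h2
    rw [util_eq _ {{1}} _ _ (by decide), util_eq _ ∅ _ _ (by decide),
      Finset.sum_empty, Finset.sum_singleton] at h3
    rw [util_eq _ {{1}} _ _ (by decide), util_eq _ {{0}} _ _ (by decide),
      Finset.sum_singleton, Finset.sum_singleton]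
    linarith
  · -- not dominates for the union
    intro hdom
    have hmem : (fun S : Finset (Fin 4) =>
        if S = {0} then (5:ℝ) else if S = {1} then 5 else if S = {2} then -6
        else if S = {3} then 1 else 0) ∈
        compatSet {(({0,1,2} : Finset (Fin 4)), ({3} : Finset (Fin 4))), ({3}, ∅), (∅, {1,2})}
          ({{0},{2},{3}} ∪ {{0},{1},{3}}) := by
      intro p hp
      fin_cases hp <;> simp only
      · rw [util_eq _ {{3}} _ _ (by decide), util_eq _ {{0},{2},{1}} _ _ (by decide),
          Finset.sum_insert (by decide), Finset.sum_insert (by decide),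
          Finset.sum_singleton, Finset.sum_singleton]
        norm_num (config := { decide := true })
      · rw [util_eq _ ∅ _ _ (by decide), util_eq _ {{3}} _ _ (by decide),
          Finset.sum_empty, Finset.sum_singleton]
        norm_num (config := { decide := true })
      · rw [util_eq _ {{2},{1}} _ _ (by decide), util_eq _ ∅ _ _ (by decide),
          Finset.sum_empty, Finset.sum_insert (by decide), Finset.sum_singleton]
        norm_num (config := { decide := true })
    have := hdom _ hmem
    rw [util_eq _ {{1}} _ _ (by decide), util_eq _ {{0}} _ _ (by decide),
      Finset.sum_singleton, Finset.sum_singleton] at this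
    norm_num (config := { decide := true }) at this
end

section
/- Let F be a finite set and let ≻ be a strict weak order on the subsets of F (i.e., ≻ is asymmetric and negatively transitive). Then there exists u : {S ⊆ F : S ≠ ∅} → ℝ such that, setting f(A) = Σ_{∅ ≠ S ⊆ A} u(S) for every subset A of F, one has f(A) > f(B) if and only if A ≻ B, for all subsets A, B of F. (The n-additive model is general enough to represent any strict weak order on the alternatives.) -/
open Finset

private noncomputable def uAux {α : Type*} [DecidableEq α] (g : Finset α → ℝ) :
    Finset α → ℝ
  | S => g S - ∑ T ∈ (S.powerset.erase S).attach, uAux g T.1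
  termination_by S => S.card
  decreasing_by
    have hT := T.2
    rw [Finset.mem_erase, Finset.mem_powerset] at hT
    exact Finset.card_lt_card (lt_of_le_of_ne hT.2 hT.1)

private theorem uAux_def {α : Type*} [DecidableEq α] (g : Finset α → ℝ) (S : Finset α) :
    uAux g S = g S - ∑ T ∈ S.powerset.erase S, uAux g T := by
  rw [uAux]
  rw [← Finset.sum_attach (S.powerset.erase S) (fun T => uAux g T)]

private theorem sum_uAux {α : Type*} [DecidableEq α] (g : Finset α → ℝ) (A : Finset α) :
    ∑ T ∈ A.powerset, uAux g T = g A := by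
  rw [← Finset.add_sum_erase _ _ (Finset.mem_powerset_self A), uAux_def]
  ring

/-- Any strict weak order (asymmetric and negatively transitive relation) on the
subsets of a finite attribute set `F` can be represented by an `n`-additive
utility model: there are parameters `u(S)` for the nonempty subsets `S` such
that `A ≻ B` iff `Σ_{∅ ≠ S ⊆ A} u(S) > Σ_{∅ ≠ S ⊆ B} u(S)`. -/
theorem stmt10 {α : Type*} [Fintype α] [DecidableEq α]
    (succ : Finset α → Finset α → Prop)
    (asymm : ∀ A B, succ A B → ¬ succ B A)
    (negtrans : ∀ A B C, ¬ succ A B → ¬ succ B C → ¬ succ A C) :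
    ∃ u : Finset α → ℝ, ∀ A B : Finset α,
      (∑ S ∈ B.powerset.erase ∅, u S) < (∑ S ∈ A.powerset.erase ∅, u S) ↔
        succ A B := by
  classical
  set f : Finset α → ℝ := fun A => ((Finset.univ.filter (fun C => succ A C)).card : ℝ)
    with hf
  have key : ∀ A B, f B < f A ↔ succ A B := by
    intro A B
    constructor
    · intro h
      by_contra hAB
      have hsub : Finset.univ.filter (fun C => succ A C) ⊆
          Finset.univ.filter (fun C => succ B C) := by
        intro C hC
        simp only [Finset.mem_filter, Finset.mem_univ, true_and] at hC ⊢
        by_contra hBC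
        exact negtrans A B C hAB hBC hC
      have := Finset.card_le_card hsub
      simp only [hf] at h
      exact absurd (Nat.cast_le.mpr this) (not_le.mpr h)
    · intro hAB
      have hsub : Finset.univ.filter (fun C => succ B C) ⊂
          Finset.univ.filter (fun C => succ A C) := by
        constructor
        · intro C hC
          simp only [Finset.mem_filter, Finset.mem_univ, true_and] at hC ⊢
          by_contra hAC
          exact negtrans A C B hAC (asymm B C hC) hAB
        · intro hle
          have hB : B ∈ Finset.univ.filter (fun C => succ A C) := by
            simp [hAB]
          have := hle hB
          simp only [Finset.mem_filter, Finset.mem_univ, true_and] at this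
          exact asymm B B this this
      exact Nat.cast_lt.mpr (Finset.card_lt_card hsub)
  set g : Finset α → ℝ := fun A => f A - f ∅ with hg
  refine ⟨uAux g, fun A B => ?_⟩
  have hsum : ∀ A : Finset α, ∑ S ∈ A.powerset.erase ∅, uAux g S = g A := by
    intro A
    have h0 : uAux g ∅ = g ∅ := by
      rw [uAux_def]; simp
    have h1 := sum_uAux g A
    rw [← Finset.add_sum_erase _ _ (by simp : (∅ : Finset α) ∈ A.powerset)] at h1
    have h2 : ∑ S ∈ A.powerset.erase ∅, uAux g S = g A - uAux g ∅ := by linarith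
    rw [h2, h0, hg]
    simp
  rw [hsum, hsum, hg]
  simp only [sub_lt_sub_iff_right]
  exact key A B
end

section
/- Let R be a finite set of strict pairwise comparisons over subsets of the finite set F, and let θ̄ = {A : (A,B) ∈ R for some B} ∪ {B : (A,B) ∈ R for some A} be the family of all alternatives appearing in R. If there exists a function g from subsets of F to ℝ with g(A) > g(B) for every (A,B) ∈ R, then U_R^{θ̄} ≠ ∅; that is, R can be represented by a θ̄-additive model. -/
/-- `θ̄`: the family of all alternatives appearing in `R`. -/
def thetaBar {α : Type*} [DecidableEq α] (R : Finset (Finset α × Finset α)) :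
    Finset (Finset α) :=
  R.image Prod.fst ∪ R.image Prod.snd

/-- Recursive solution: `solve θ g A = g A - Σ_{S ∈ θ, S ⊂ A} solve θ g S` for `A ∈ θ`, else 0. -/
def solve {α : Type*} [DecidableEq α] (θ : Finset (Finset α)) (g : Finset α → ℝ)
    (A : Finset α) : ℝ :=
  if A ∈ θ then g A - ∑ S ∈ (θ.filter (· ⊂ A)).attach, solve θ g S.1 else 0
termination_by A.card
decreasing_by exact Finset.card_lt_card (Finset.mem_filter.mp S.2).2

lemma util_solve {α : Type*} [DecidableEq α] (θ : Finset (Finset α)) (g : Finset α → ℝ)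
    {A : Finset α} (hA : A ∈ θ) : util θ (solve θ g) A = g A := by
  have hsplit : θ.filter (· ⊆ A) = insert A (θ.filter (· ⊂ A)) := by
    ext S
    simp only [Finset.mem_filter, Finset.mem_insert]
    constructor
    · rintro ⟨hS, hSA⟩
      rcases eq_or_ne S A with h | h
      · exact Or.inl h
      · exact Or.inr ⟨hS, lt_of_le_of_ne hSA h⟩
    · rintro (rfl | ⟨hS, hSA⟩)
      · exact ⟨hA, le_refl _⟩
      · exact ⟨hS, le_of_lt hSA⟩
  have hnotmem : A ∉ θ.filter (· ⊂ A) := by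
    simp only [Finset.mem_filter]
    exact fun h => absurd h.2 (lt_irrefl A)
  rw [util, hsplit, Finset.sum_insert hnotmem]
  rw [show solve θ g A = g A - ∑ S ∈ (θ.filter (· ⊂ A)).attach, solve θ g S.1 by
    rw [solve]; simp [hA]]
  rw [Finset.sum_attach]
  ring

/-- If some real-valued set function `g` represents the preferences in `R`,
then `R` can be represented by a `θ̄`-additive model, where `θ̄` consists of
all alternatives appearing in `R`. -/
theorem stmt12 {α : Type*} [Fintype α] [DecidableEq α]
    (R : Finset (Finset α × Finset α))
    (hg : ∃ g : Finset α → ℝ, ∀ p ∈ R, g p.2 < g p.1) :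
    (compatSet R (thetaBar R)).Nonempty := by
  obtain ⟨g, hg⟩ := hg
  refine ⟨solve (thetaBar R) g, fun p hp => ?_⟩
  have h1 : p.1 ∈ thetaBar R := by
    simp only [thetaBar, Finset.mem_union, Finset.mem_image]
    exact Or.inl ⟨p, hp, rfl⟩
  have h2 : p.2 ∈ thetaBar R := by
    simp only [thetaBar, Finset.mem_union, Finset.mem_image]
    exact Or.inr ⟨p, hp, rfl⟩
  rw [util_solve _ _ h1, util_solve _ _ h2]
  exact hg p hp
end

section
/- Let R be a finite set of strict pairwise comparisons over subsets of the finite set F, let θ be a family of subsets of F, and let A, B be alternatives. Then A ≻_θ^R B (i.e., f_{θ,u}(A) > f_{θ,u}(B) for every u ∈ U_R^θ) if and only if f_{θ,u}(A) > f_{θ,u}(B) for every u : θ → ℝ satisfying f_{θ,u}(C) − f_{θ,u}(D) ≥ 1 for all (C,D) ∈ R. (Dominance can be checked on the polyhedron P1 with margin 1 instead of on the open set of strictly compatible utilities.) -/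
/-- Dominance `A ≻_θ^R B` can equivalently be checked on the polyhedron P1
with margin 1: `f_{θ,u}(A) > f_{θ,u}(B)` for every `u` with
`f_{θ,u}(C) − f_{θ,u}(D) ≥ 1` for all `(C,D) ∈ R`. -/
theorem stmt18 {α : Type*} [Fintype α] [DecidableEq α]
    (R : Finset (Finset α × Finset α)) (θ : Finset (Finset α))
    (A B : Finset α) :
    dominates R θ A B ↔
      ∀ u : Finset α → ℝ, (∀ p ∈ R, 1 ≤ util θ u p.1 - util θ u p.2) →
        util θ u B < util θ u A := by
  have smul : ∀ (c : ℝ) (u : Finset α → ℝ) (X : Finset α),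
      util θ (fun S => c * u S) X = c * util θ u X := by
    intro c u X
    simp [util, Finset.mul_sum]
  constructor
  · intro h u hu
    exact h u (fun p hp => by have := hu p hp; linarith)
  · intro h u hu
    rcases R.eq_empty_or_nonempty with rfl | hR
    · exact h u (by simp)
    · set m : ℝ := R.inf' hR (fun p => util θ u p.1 - util θ u p.2) with hm
      have hmpos : 0 < m := by
        rw [hm, Finset.lt_inf'_iff]
        intro p hp
        have := hu p hp
        linarith
      have key := h (fun S => m⁻¹ * u S) (fun p hp => by
        rw [smul, smul]
        have hle : m ≤ util θ u p.1 - util θ u p.2 :=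
          Finset.inf'_le _ hp
        rw [← mul_sub]
        calc (1 : ℝ) = m⁻¹ * m := by field_simp
          _ ≤ m⁻¹ * (util θ u p.1 - util θ u p.2) := by
              apply mul_le_mul_of_nonneg_left hle (by positivity))
      rw [smul, smul] at key
      have hi : (0:ℝ) < m⁻¹ := inv_pos.mpr hmpos
      nlinarith [key, hi]
end
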